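/- Let q and z be points of the three-dimensional Euclidean inner product space with 0 < ‖q − z‖ < R_z, and let ℓ = ‖q − z‖. Then the function p ↦ V_anchor(‖p − z‖) has gradient at q equal to k_z·tan(ℓ·π/(2R_z))·(q − z)/ℓ; equivalently, the anchoring force f_anchor(q, z, R_z) = −k_z·tan(ℓ·π/(2R_z))·(q − z)/ℓ equals the negative gradient of this function at q. -/

import Mathlib

open Real

/-- V_anchor(ℓ) = −k_z·(2R_z/π)·log(cos(ℓ·π/(2R_z))). -/
noncomputable def Vanchor (kz Rz ℓ : ℝ) : ℝ :=
  -kz * (2 * Rz / π) * Real.log (Real.cos (ℓ * π / (2 * Rz)))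

/-- The anchoring force f_anchor(q,z,R_z) = −k_z·tan(ℓπ/(2R_z))·(q−z)/ℓ with ℓ = ‖q−z‖. -/
noncomputable def fAnchor (kz Rz : ℝ) (q z : EuclideanSpace ℝ (Fin 3)) :
    EuclideanSpace ℝ (Fin 3) :=
  (-(kz * Real.tan (‖q - z‖ * π / (2 * Rz))) / ‖q - z‖) • (q - z)

/-! Away from the centre, `‖p - z‖` has unit radial gradient `(q - z) / ‖q - z‖`, and
`V_anchor' ℓ = k_z tan (ℓπ / (2R_z))` since `(log ∘ cos)' = -tan`; the chain rule gives the
gradient. -/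

section Gradient

variable {F : Type*} [NormedAddCommGroup F] [InnerProductSpace ℝ F] [CompleteSpace F]

theorem HasDerivAt.comp_hasGradientAt {f : ℝ → ℝ} {f' : ℝ} {g : F → ℝ} {g' : F} {x : F}
    (hf : HasDerivAt f f' (g x)) (hg : HasGradientAt g g' x) :
    HasGradientAt (f ∘ g) (f' • g') x := by
  rw [hasGradientAt_iff_hasFDerivAt] at hg ⊢
  simpa only [map_smul] using hf.comp_hasFDerivAt x hg

theorem hasGradientAt_norm_sub {x z : F} (hxz : x ≠ z) :
    HasGradientAt (fun p => ‖p - z‖) (‖x - z‖⁻¹ • (x - z)) x := by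
  have hnorm_sq : HasGradientAt (fun p => ‖p - z‖ ^ 2) ((2 : ℝ) • (x - z)) x := by
    rw [hasGradientAt_iff_hasFDerivAt]
    refine (((hasFDerivAt_id x).sub_const z).norm_sq).congr_fderiv ?_
    ext y
    simp
  have hxz' : 0 < ‖x - z‖ := norm_pos_iff.mpr (sub_ne_zero.mpr hxz)
  have hsqrt : HasDerivAt sqrt (1 / (2 * ‖x - z‖)) (‖x - z‖ ^ 2) := by
    simpa [hxz'.le] using Real.hasDerivAt_sqrt (pow_pos hxz' 2).ne'
  convert hsqrt.comp_hasGradientAt (g := fun p => ‖p - z‖ ^ 2) hnorm_sq using 1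
  · ext p
    simp
  · rw [smul_smul]
    field_simp [hxz'.ne']

end Gradient

theorem cos_pos_of_abs_lt {Rz ℓ : ℝ} (h : |ℓ| < Rz) :
    0 < cos (ℓ * π / (2 * Rz)) := by
  obtain ⟨h0, h1⟩ := abs_lt.mp h
  have hR : 0 < Rz := by linarith
  apply cos_pos_of_mem_Ioo
  constructor
  · rw [lt_div_iff₀ (by positivity)]
    nlinarith [pi_pos]
  · rw [div_lt_div_iff₀ (by positivity) two_pos]
    nlinarith [pi_pos]

theorem hasDerivAt_Vanchor (kz : ℝ) {Rz ℓ : ℝ} (h : |ℓ| < Rz) :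
    HasDerivAt (Vanchor kz Rz) (kz * tan (ℓ * π / (2 * Rz))) ℓ := by
  have hR : 0 < Rz := (abs_nonneg ℓ).trans_lt h
  have harg : HasDerivAt (fun x : ℝ => x * π / (2 * Rz)) (π / (2 * Rz)) ℓ := by
    simpa using ((hasDerivAt_id ℓ).mul_const π).div_const (2 * Rz)
  have hlog := (((hasDerivAt_cos _).comp ℓ harg).log (cos_pos_of_abs_lt h).ne').const_mul
    (-kz * (2 * Rz / π))
  refine hlog.congr_deriv ?_
  rw [tan_eq_sin_div_cos, Function.comp_apply]
  field_simp [pi_pos.ne']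

theorem gradient_Vanchor_general (kz Rz : ℝ)
    (q z : EuclideanSpace ℝ (Fin 3)) (h0 : 0 < ‖q - z‖) (h1 : ‖q - z‖ < Rz) :
    gradient (fun p => Vanchor kz Rz ‖p - z‖) q =
      ((kz * Real.tan (‖q - z‖ * π / (2 * Rz))) / ‖q - z‖) • (q - z) ∧
    fAnchor kz Rz q z = -gradient (fun p => Vanchor kz Rz ‖p - z‖) q := by
  have hqz : q ≠ z := sub_ne_zero.mp (norm_pos_iff.mp h0)
  have hgrad : HasGradientAt (fun p => Vanchor kz Rz ‖p - z‖)
      ((kz * tan (‖q - z‖ * π / (2 * Rz)) / ‖q - z‖) • (q - z)) q := by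
    rw [div_eq_mul_inv, ← smul_smul]
    exact (hasDerivAt_Vanchor kz (by rwa [abs_of_pos h0])).comp_hasGradientAt (g := (‖· - z‖))
      (hasGradientAt_norm_sub hqz)
  refine ⟨hgrad.gradient, ?_⟩
  rw [hgrad.gradient, fAnchor, neg_div, neg_smul]

theorem gradient_Vanchor (kz Rz : ℝ) (hk : 0 < kz) (hR : 0 < Rz)
    (q z : EuclideanSpace ℝ (Fin 3)) (h0 : 0 < ‖q - z‖) (h1 : ‖q - z‖ < Rz) :
    gradient (fun p => Vanchor kz Rz ‖p - z‖) q =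
      ((kz * Real.tan (‖q - z‖ * π / (2 * Rz))) / ‖q - z‖) • (q - z) ∧
    fAnchor kz Rz q z = -gradient (fun p => Vanchor kz Rz ‖p - z‖) q :=
  gradient_Vanchor_general kz Rz q z h0 h1
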